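/- Let p be prime and A an n×n subring matrix of determinant a power of p such that all diagonal entries except the last are positive powers of p (an irreducible subring matrix). Then every 2×2 minor of A is divisible by p, and consequently the cokernel Z^n/col(A) has rank exactly n-1; i.e., every irreducible subring of Z^n has corank n-1. -/

import Mathlib

def colSpan {n : ℕ} (A : Matrix (Fin n) (Fin n) ℤ) : AddSubgroup (Fin n → ℤ) :=
  AddSubgroup.closure (Set.range fun j => fun i => A i j)

def IsSubringOf {n : ℕ} (R : AddSubgroup (Fin n → ℤ)) : Prop :=
  (fun _ => (1 : ℤ)) ∈ R ∧ ∀ u v : Fin n → ℤ, u ∈ R → v ∈ R → u * v ∈ R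

def IsHNF {n : ℕ} (A : Matrix (Fin n) (Fin n) ℤ) : Prop :=
  (∀ i j : Fin n, (j : ℕ) < (i : ℕ) → A i j = 0) ∧
  (∀ i j : Fin n, (i : ℕ) < (j : ℕ) → 0 ≤ A i j ∧ A i j < A i i)

def IsSubringMatrix {n : ℕ} (A : Matrix (Fin n) (Fin n) ℤ) : Prop :=
  IsHNF A ∧ A.det ≠ 0 ∧ IsSubringOf (colSpan A)

def GenLE {n : ℕ} (R : AddSubgroup (Fin n → ℤ)) (k : ℕ) : Prop :=
  ∃ S : Finset ((Fin n → ℤ) ⧸ R), S.card ≤ k ∧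
    AddSubgroup.closure (S : Set ((Fin n → ℤ) ⧸ R)) = ⊤

def RankGe {n : ℕ} (R : AddSubgroup (Fin n → ℤ)) (k : ℕ) : Prop :=
  ∀ S : Finset ((Fin n → ℤ) ⧸ R),
    AddSubgroup.closure (S : Set ((Fin n → ℤ) ⧸ R)) = ⊤ → k ≤ S.card

def RankEq {n : ℕ} (R : AddSubgroup (Fin n → ℤ)) (k : ℕ) : Prop :=
  GenLE R k ∧ RankGe R k

/-!
Subtracting a multiple of the constant vector `1 ∈ R = col(A)`, it suffices to show that every
`w ∈ R` with `w_last = 0` has all coordinates divisible by `p`. By Euler's theorem,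
`w ^ φ(p^(m+1))` agrees modulo `p^m = det A` with the `0/1`-indicator `u` of the coordinates of `w`
prime to `p`, and `det A • ℤⁿ ⊆ R`, so `u ∈ R`. Solving `A x = u` from the bottom up, each diagonal
entry `p^(e_i)` would have to divide `u_i ∈ {0, 1}`; hence `u = 0`.

So the coordinates of each element of `R` are congruent mod `p`. The rows of every minor then
agree mod `p`, and `v ↦ (v_i - v_last mod p)_{i < n}` maps `ℤ^(n+1)/R` onto `𝔽_pⁿ`, so the quotient
needs `n` generators; the classes of `e_1, …, e_n` suffice because `e_1 + ⋯ + e_(n+1) = 1 ∈ R`.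
-/

open Matrix Finset
open scoped Nat

theorem Int.ModEq.pow_totient {a : ℤ} {n : ℕ} (h : IsCoprime a n) : a ^ φ n ≡ 1 [ZMOD n] := by
  have h := congrArg Units.val (ZMod.pow_totient (ZMod.unitOfIsCoprime a h))
  rw [Units.val_pow_eq_pow_val, ZMod.coe_unitOfIsCoprime, Units.val_one] at h
  rw [← ZMod.intCast_eq_intCast_iff]
  push_cast
  exact h

theorem Int.pow_totient_prime_pow_modEq_ite {p : ℕ} (hp : p.Prime) (m : ℕ) (a : ℤ) :
    a ^ φ (p ^ (m + 1)) ≡ if (p : ℤ) ∣ a then 0 else 1 [ZMOD p ^ m] := by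
  split_ifs with hpa
  · have hm : m ≤ φ (p ^ (m + 1)) := by
      rw [Nat.totient_prime_pow_succ hp]
      exact (Nat.lt_pow_self hp.one_lt).le.trans
        (Nat.le_mul_of_pos_right _ (Nat.sub_pos_of_lt hp.one_lt))
    exact Int.modEq_zero_iff_dvd.mpr
      (by exact_mod_cast (pow_dvd_pow _ hm).trans (pow_dvd_pow_of_dvd hpa _))
  · have hcop : IsCoprime a ((p ^ (m + 1) : ℕ) : ℤ) := by
      rw [Nat.cast_pow]
      exact ((Nat.prime_iff_prime_int.mp hp).irreducible.coprime_iff_not_dvd.mpr hpa).symm.pow_right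
    exact (Int.ModEq.pow_totient hcop).of_dvd (by push_cast; exact pow_dvd_pow _ m.le_succ)

theorem Matrix.IsUpperTriangular.eq_zero_of_diag_dvd_mulVec {ι R : Type*} [Fintype ι]
    [LinearOrder ι] [CommRing R] [IsDomain R] {A : Matrix ι ι R} (hA : A.IsUpperTriangular)
    (hdet : A.det ≠ 0) {x : ι → R} (hx : ∀ i, A i i ∣ (A *ᵥ x) i → (A *ᵥ x) i = 0) : x = 0 := by
  classical
  by_contra hne
  obtain ⟨j, hj, hmax⟩ := exists_max_image (univ.filter (x · ≠ 0)) id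
    (by simpa [Finset.filter_nonempty_iff, funext_iff] using hne)
  have hdiag : A j j ≠ 0 := by
    rw [det_of_isUpperTriangular hA] at hdet
    exact prod_ne_zero_iff.mp hdet j (mem_univ j)
  have hrow : (A *ᵥ x) j = A j j * x j := by
    refine sum_eq_single j (fun k _ hkj => ?_) (by simp)
    rcases hkj.lt_or_gt with hk | hk
    · change A j k * x k = 0
      rw [hA hk, zero_mul]
    · have hxk : x k = 0 := by
        by_contra h
        exact hk.not_ge (hmax k (by simp [h]))
      rw [hxk, mul_zero]
  have hvj := hx j (hrow ▸ dvd_mul_right _ _)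
  rw [hrow] at hvj
  exact mul_ne_zero hdiag (by simpa using hj) hvj

theorem dvd_det_of_forall_modEq {m : Type*} [Fintype m] [DecidableEq m] [Nontrivial m] {p : ℕ}
    {M : Matrix m m ℤ} (h : ∀ i i' j, M i j ≡ M i' j [ZMOD p]) : (p : ℤ) ∣ M.det := by
  obtain ⟨i, i', hne⟩ := exists_pair_ne m
  rw [← ZMod.intCast_zmod_eq_zero_iff_dvd, Int.cast_det]
  exact det_zero_of_row_eq hne (funext fun j => (ZMod.intCast_eq_intCast_iff _ _ _).mpr (h i i' j))

theorem le_card_of_closure_eq_top {G K : Type*} [AddCommGroup G] [Field K] {n : ℕ}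
    (f : G →+ (Fin n → K)) (hf : Function.Surjective f) {S : Finset G}
    (hS : AddSubgroup.closure (S : Set G) = ⊤) : n ≤ S.card := by
  classical
  have hspan : Submodule.span K (S.image f : Set (Fin n → K)) = ⊤ := by
    rw [eq_top_iff, ← Submodule.toAddSubgroup_le, Submodule.top_toAddSubgroup,
      ← AddSubgroup.map_top_of_surjective f hf, ← hS, AddMonoidHom.map_closure, coe_image]
    exact AddSubgroup.closure_le _ |>.mpr Submodule.subset_span
  calc n = Module.finrank K (Fin n → K) := (Module.finrank_fin_fun K).symm
    _ ≤ (S.image f).card := by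
      have := finrank_span_finset_le_card (R := K) (S.image f)
      rwa [Set.finrank, hspan, finrank_top] at this
    _ ≤ S.card := card_image_le

theorem mem_colSpan_iff {n : ℕ} {A : Matrix (Fin n) (Fin n) ℤ} {v : Fin n → ℤ} :
    v ∈ colSpan A ↔ ∃ x, A *ᵥ x = v := by
  rw [colSpan, ← Submodule.span_int_eq_addSubgroupClosure, Submodule.mem_toAddSubgroup,
    show (Set.range fun j i => A i j) = Set.range A.col from rfl, ← Matrix.range_mulVecLin]
  rfl

theorem mem_colSpan_of_forall_det_dvd {n : ℕ} {A : Matrix (Fin n) (Fin n) ℤ} {w : Fin n → ℤ}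
    (hw : ∀ k, A.det ∣ w k) : w ∈ colSpan A := by
  choose q hq using hw
  refine mem_colSpan_iff.mpr ⟨A.adjugate *ᵥ q, ?_⟩
  rw [mulVec_mulVec, mul_adjugate, smul_mulVec, one_mulVec]
  exact funext fun k => (hq k).symm

theorem IsSubringOf.pow_mem {n : ℕ} {R : AddSubgroup (Fin n → ℤ)} (hR : IsSubringOf R)
    {v : Fin n → ℤ} (hv : v ∈ R) (k : ℕ) : v ^ k ∈ R := by
  induction k with
  | zero => exact (pow_zero v).symm ▸ hR.1
  | succ k ih => exact pow_succ v k ▸ hR.2 _ _ ih hv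

theorem IsSubringOf.ite_not_dvd_mem {n p m : ℕ} {R : AddSubgroup (Fin n → ℤ)}
    (hR : IsSubringOf R) (hp : p.Prime) (hpm : ∀ w : Fin n → ℤ, (∀ k, (p : ℤ) ^ m ∣ w k) → w ∈ R)
    {v : Fin n → ℤ} (hv : v ∈ R) : (fun k => if (p : ℤ) ∣ v k then 0 else 1) ∈ R := by
  have hdiff : v ^ φ (p ^ (m + 1)) - (fun k => if (p : ℤ) ∣ v k then 0 else 1) ∈ R :=
    hpm _ fun k => (Int.pow_totient_prime_pow_modEq_ite hp m (v k)).symm.dvd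
  simpa only [sub_sub_cancel] using R.sub_mem (hR.pow_mem hv (φ (p ^ (m + 1)))) hdiff

theorem IsSubringMatrix.modEq_last_of_mem_colSpan {n p m : ℕ} (hp : p.Prime)
    {A : Matrix (Fin (n + 1)) (Fin (n + 1)) ℤ} (hA : IsSubringMatrix A)
    (hdet : A.det = (p : ℤ) ^ m) {e : Fin n → ℕ} (he : ∀ i, 1 ≤ e i)
    (hdiag : ∀ i : Fin n, A i.castSucc i.castSucc = (p : ℤ) ^ e i)
    {v : Fin (n + 1) → ℤ} (hv : v ∈ colSpan A) (i : Fin (n + 1)) :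
    v i ≡ v (Fin.last n) [ZMOD p] := by
  obtain ⟨⟨htri, -⟩, hdet0, hR⟩ := hA
  set w := v - v (Fin.last n) • fun _ => (1 : ℤ)
  have hw : w ∈ colSpan A := sub_mem hv (zsmul_mem hR.1 _)
  set u : Fin (n + 1) → ℤ := fun k => if (p : ℤ) ∣ w k then 0 else 1
  have hu : u ∈ colSpan A :=
    hR.ite_not_dvd_mem hp (fun _ hdvd => mem_colSpan_of_forall_det_dvd (hdet ▸ hdvd)) hw
  obtain ⟨x, hx⟩ := mem_colSpan_iff.mp hu
  have hx0 : x = 0 := by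
    refine IsUpperTriangular.eq_zero_of_diag_dvd_mulVec (fun i j h => htri i j h) hdet0 ?_
    rw [hx]
    intro k
    cases k using Fin.lastCases with
    | last => simp [u, w]
    | cast j =>
      by_cases hpj : (p : ℤ) ∣ w j.castSucc
      · simp [u, hpj]
      · rw [hdiag]
        simp only [u, hpj, if_false, one_ne_zero, imp_false]
        exact fun hdvd => (Nat.prime_iff_prime_int.mp hp).not_dvd_one
          ((dvd_pow_self _ (Nat.pos_iff_ne_zero.mp (he j))).trans hdvd)
  have hpw : (p : ℤ) ∣ w i := by
    by_contra h
    have hui := congrFun hx i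
    rw [hx0, mulVec_zero] at hui
    simp [u, h] at hui
  exact (Int.modEq_iff_dvd.mpr (by simpa [w] using hpw)).symm

theorem genLE_of_one_mem {n : ℕ} {R : AddSubgroup (Fin (n + 1) → ℤ)}
    (h1 : (fun _ => (1 : ℤ)) ∈ R) : GenLE R n := by
  classical
  let mk := QuotientAddGroup.mk' R
  let S := univ.image fun i : Fin n => mk (Pi.single i.castSucc 1)
  refine ⟨S, card_image_le.trans (card_fin n).le, ?_⟩
  have hsingle : ∀ j, mk (Pi.single j 1) ∈ AddSubgroup.closure (S : Set _) := by
    intro j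
    cases j using Fin.lastCases with
    | cast i => exact AddSubgroup.subset_closure (by simp [S])
    | last =>
      have hsum : ∑ j, mk (Pi.single j 1) = 0 := by
        rw [← map_sum, univ_sum_single]
        exact (QuotientAddGroup.eq_zero_iff _).mpr h1
      rw [Fin.sum_univ_castSucc] at hsum
      rw [eq_neg_of_add_eq_zero_right hsum]
      exact neg_mem (sum_mem fun i _ => AddSubgroup.subset_closure (by simp [S]))
  have hgen : AddSubgroup.closure (Set.range fun j : Fin (n + 1) => Pi.single j (1 : ℤ)) = ⊤ := by
    rw [← Submodule.span_int_eq_addSubgroupClosure]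
    simp [← Pi.basisFun_apply]
  rw [eq_top_iff, ← AddSubgroup.map_top_of_surjective mk (QuotientAddGroup.mk'_surjective R),
    ← hgen, AddMonoidHom.map_closure, AddSubgroup.closure_le]
  rintro _ ⟨_, ⟨j, rfl⟩, rfl⟩
  exact hsingle j

theorem rankGe_of_modEq_last {n p : ℕ} (hp : p.Prime) {R : AddSubgroup (Fin (n + 1) → ℤ)}
    (hR : ∀ v ∈ R, ∀ i, v i ≡ v (Fin.last n) [ZMOD p]) : RankGe R n := by
  have := Fact.mk hp
  let g : (Fin (n + 1) → ℤ) →+ (Fin n → ZMod p) :=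
    { toFun v i := ((v i.castSucc - v (Fin.last n) : ℤ) : ZMod p)
      map_zero' := funext fun _ => by simp
      map_add' v w := funext fun i => by simp only [Pi.add_apply]; push_cast; ring }
  have hker : R ≤ g.ker := fun v hv => funext fun i => by
    simpa [g, sub_eq_zero, ZMod.intCast_eq_intCast_iff] using hR v hv i.castSucc
  have hg : Function.Surjective g := fun y =>
    ⟨Fin.snoc (fun i => ((y i).cast : ℤ)) 0, funext fun i => by simp [g]⟩
  exact fun S hS => le_card_of_closure_eq_top _
    (QuotientAddGroup.lift_surjective_of_surjective R g hg hker) hS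

theorem irreducible_subring_corank_general (n p : ℕ) (hp : p.Prime)
    (A : Matrix (Fin (n + 1)) (Fin (n + 1)) ℤ) (hA : IsSubringMatrix A)
    (hdetp : ∃ m : ℕ, A.det = (p : ℤ) ^ m)
    (e : Fin n → ℕ) (he : ∀ i, 1 ≤ e i)
    (hdiag : ∀ i : Fin n, A i.castSucc i.castSucc = (p : ℤ) ^ e i) :
    (∀ r c : Fin 2 → Fin (n + 1), Function.Injective r → Function.Injective c →
      (p : ℤ) ∣ (A.submatrix r c).det) ∧ RankEq (colSpan A) n := by
  obtain ⟨m, hdet⟩ := hdetp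
  have hcong : ∀ v ∈ colSpan A, ∀ i, v i ≡ v (Fin.last n) [ZMOD p] :=
    fun v hv => hA.modEq_last_of_mem_colSpan hp hdet he hdiag hv
  have hcol (j : Fin (n + 1)) : (fun i => A i j) ∈ colSpan A :=
    AddSubgroup.subset_closure (Set.mem_range_self j)
  refine ⟨fun r c _ _ => dvd_det_of_forall_modEq fun i i' j => ?_,
    genLE_of_one_mem hA.2.2.1, rankGe_of_modEq_last hp hcong⟩
  exact (hcong _ (hcol (c j)) (r i)).trans (hcong _ (hcol (c j)) (r i')).symm

theorem irreducible_subring_corank (n p : ℕ) (hp : p.Prime)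
    (A : Matrix (Fin (n + 1)) (Fin (n + 1)) ℤ) (hA : IsSubringMatrix A)
    (hdetp : ∃ m : ℕ, A.det = (p : ℤ) ^ m)
    (e : Fin n → ℕ) (he : ∀ i, 1 ≤ e i)
    (hdiag : ∀ i : Fin n, A i.castSucc i.castSucc = (p : ℤ) ^ e i)
    (hlast : A (Fin.last n) (Fin.last n) = 1) :
    (∀ r c : Fin 2 → Fin (n + 1), Function.Injective r → Function.Injective c →
      (p : ℤ) ∣ (A.submatrix r c).det) ∧ RankEq (colSpan A) n :=
  irreducible_subring_corank_general n p hp A hA hdetp e he hdiag
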